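/- For all a, b > 0 there exist c > 0 and n₀ ∈ ℕ, depending only on a and b, such that the following holds for every n ≥ n₀: if D ⊆ K is measurable, B₀, B₁, B₂ ⊆ D are pairwise disjoint measurable sets with A(B_i) ≥ a·A(K)/n for i = 0,1,2 and A(D) ≤ b·A(K)/n, and x₁, …, x_n are i.i.d. points uniformly distributed in K, then the probability that each of B₀, B₁, B₂ contains exactly one of the points x₁, …, x_n and that D ∖ (B₀ ∪ B₁ ∪ B₂) contains none of them is at least c. -/

import Mathlib

/-!
For each injection `σ : Fin 3 ↪ Fin n`, consider the event that the point `x_{σ k}` lies in `B k`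
for every `k` and every other point lies outside `D`. These events are pairwise disjoint, all lie
inside the event of the theorem, and by independence each has probability at least
`(a/n)^3 (1 - b/n)^(n-3)`. Summing over the `n(n-1)(n-2) ≥ n^3/4` injections (for `n ≥ 4`) and using
`1 - x ≥ e^{-2x}` for `0 ≤ x ≤ 1/2` gives the lower bound `c = a^3 e^{-2b} / 4` once `n ≥ 2b`.
-/

open MeasureTheory ProbabilityTheory

noncomputable section

/-- The Euclidean plane. -/
abbrev E2 : Type := EuclideanSpace ℝ (Fin 2)

/-- The uniform (normalized Lebesgue) measure on a set `S`. -/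
def unif (S : Set E2) : Measure E2 := (volume S)⁻¹ • volume.restrict S

section

open Set Function Real
open scoped ENNReal

variable {α : Type*} {m n : ℕ} {B : Fin m → Set α} {D : Set α}

def oneInEachCell (B : Fin m → Set α) (D : Set α) : Set (Fin n → α) :=
  {x | (∀ k, {i | x i ∈ B k}.ncard = 1) ∧ ∀ i, x i ∉ D \ ⋃ k, B k}

def assignedCell (B : Fin m → Set α) (D : Set α) (σ : Fin m ↪ Fin n) (j : Fin n) : Set α :=
  if h : j ∈ range σ then B (σ.invOfMemRange ⟨j, h⟩) else Dᶜ

@[simp]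
lemma assignedCell_apply_self (σ : Fin m ↪ Fin n) (k : Fin m) :
    assignedCell B D σ (σ k) = B k := by
  simp [assignedCell]

lemma assignedCell_of_notMem_range {σ : Fin m ↪ Fin n} {j : Fin n} (hj : j ∉ range σ) :
    assignedCell B D σ j = Dᶜ := by
  simp [assignedCell, hj]

lemma measurableSet_assignedCell [MeasurableSpace α] (hB : ∀ k, MeasurableSet (B k))
    (hD : MeasurableSet D) (σ : Fin m ↪ Fin n) (j : Fin n) :
    MeasurableSet (assignedCell B D σ j) := by
  unfold assignedCell
  split_ifs
  exacts [hB _, hD.compl]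

lemma eq_of_mem_assignedCell_of_mem (hBD : ∀ k, B k ⊆ D) (hB : Pairwise (Disjoint on B))
    {σ : Fin m ↪ Fin n} {j : Fin n} {k : Fin m} {y : α}
    (hy : y ∈ assignedCell B D σ j) (hyk : y ∈ B k) : j = σ k := by
  by_cases hj : j ∈ range σ
  · obtain ⟨l, rfl⟩ := hj
    rw [assignedCell_apply_self] at hy
    by_contra hlk
    exact (hB fun h => hlk (congrArg σ h)).le_bot ⟨hy, hyk⟩
  · rw [assignedCell_of_notMem_range hj] at hy
    exact absurd (hBD k hyk) hy

lemma pi_assignedCell_subset_oneInEachCell (hBD : ∀ k, B k ⊆ D)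
    (hB : Pairwise (Disjoint on B)) (σ : Fin m ↪ Fin n) :
    univ.pi (assignedCell B D σ) ⊆ oneInEachCell B D := by
  intro x hx
  simp only [mem_univ_pi] at hx
  refine ⟨fun k => ?_, fun i hi => ?_⟩
  · have hfiber : {i | x i ∈ B k} = {σ k} := by
      ext i
      refine ⟨fun hi => eq_of_mem_assignedCell_of_mem hBD hB (hx i) hi, ?_⟩
      rintro rfl
      simpa using hx (σ k)
    rw [hfiber, ncard_singleton]
  · by_cases hiσ : i ∈ range σ
    · obtain ⟨k, rfl⟩ := hiσ
      exact hi.2 (mem_iUnion_of_mem k (by simpa using hx (σ k)))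
    · have hxi := hx i
      rw [assignedCell_of_notMem_range hiσ] at hxi
      exact hxi hi.1

lemma pairwise_disjoint_pi_assignedCell (hBD : ∀ k, B k ⊆ D) (hB : Pairwise (Disjoint on B)) :
    Pairwise (Disjoint on fun σ : Fin m ↪ Fin n => univ.pi (assignedCell B D σ)) := by
  intro σ τ hστ
  rw [onFun, Set.disjoint_left]
  intro x hσ hτ
  simp only [mem_univ_pi] at hσ hτ
  refine hστ (DFunLike.ext σ τ fun k => ?_)
  have hk : x (σ k) ∈ B k := by simpa using hσ (σ k)
  exact eq_of_mem_assignedCell_of_mem hBD hB (hτ (σ k)) hk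

variable [MeasurableSpace α] {p q : ℝ≥0∞}

lemma pow_mul_pow_le_prod_assignedCell (μ : Measure α) (hp : ∀ k, p ≤ μ (B k)) (hq : q ≤ μ Dᶜ)
    (σ : Fin m ↪ Fin n) : p ^ m * q ^ (n - m) ≤ ∏ j, μ (assignedCell B D σ j) := by
  classical
  set s := Finset.univ.map σ
  have hs : s.card = m := by simp [s]
  have hsc : sᶜ.card = n - m := by simp [Finset.card_compl, hs]
  calc p ^ m * q ^ (n - m) = (∏ _j ∈ s, p) * ∏ _j ∈ sᶜ, q := by
        simp only [Finset.prod_const, hs, hsc]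
    _ ≤ (∏ j ∈ s, μ (assignedCell B D σ j)) * ∏ j ∈ sᶜ, μ (assignedCell B D σ j) := by
        gcongr with j hj j hj
        · obtain ⟨k, -, rfl⟩ := Finset.mem_map.mp hj
          simpa using hp k
        · rwa [assignedCell_of_notMem_range (by simpa [s] using hj)]
    _ = ∏ j, μ (assignedCell B D σ j) := Finset.prod_mul_prod_compl s _

theorem descFactorial_mul_le_pi_iUnion_assignedCell (μ : Measure α) [SigmaFinite μ]
    (hBm : ∀ k, MeasurableSet (B k)) (hDm : MeasurableSet D) (hBD : ∀ k, B k ⊆ D)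
    (hB : Pairwise (Disjoint on B)) (hp : ∀ k, p ≤ μ (B k)) (hq : q ≤ μ Dᶜ) :
    n.descFactorial m * (p ^ m * q ^ (n - m)) ≤
      Measure.pi (fun _ : Fin n => μ) (⋃ σ : Fin m ↪ Fin n, univ.pi (assignedCell B D σ)) := by
  rw [measure_iUnion (pairwise_disjoint_pi_assignedCell hBD hB)
    (fun σ => .univ_pi (measurableSet_assignedCell hBm hDm σ)), tsum_fintype]
  calc (n.descFactorial m : ℝ≥0∞) * (p ^ m * q ^ (n - m))
      = ∑ _σ : Fin m ↪ Fin n, p ^ m * q ^ (n - m) := by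
        simp [Fintype.card_embedding_eq]
    _ ≤ _ := Finset.sum_le_sum fun σ _ => by
        simpa only [Measure.pi_pi] using pow_mul_pow_le_prod_assignedCell μ hp hq σ

theorem descFactorial_mul_le_measure_oneInEachCell {Ω : Type*} [MeasurableSpace Ω]
    (P : Measure Ω) [IsProbabilityMeasure P] (μ : Measure α) [SigmaFinite μ]
    {X : Fin n → Ω → α} (hXm : ∀ i, Measurable (X i)) (hX : iIndepFun X P)
    (hlaw : ∀ i, P.map (X i) = μ)
    (hBm : ∀ k, MeasurableSet (B k)) (hDm : MeasurableSet D) (hBD : ∀ k, B k ⊆ D)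
    (hB : Pairwise (Disjoint on B)) (hp : ∀ k, p ≤ μ (B k)) (hq : q ≤ μ Dᶜ) :
    n.descFactorial m * (p ^ m * q ^ (n - m)) ≤
      P {ω | (fun i => X i ω) ∈ oneInEachCell B D} := by
  have hcells : MeasurableSet (⋃ σ : Fin m ↪ Fin n, univ.pi (assignedCell B D σ)) :=
    .iUnion fun σ => .univ_pi (measurableSet_assignedCell hBm hDm σ)
  calc (n.descFactorial m : ℝ≥0∞) * (p ^ m * q ^ (n - m))
      ≤ Measure.pi (fun _ : Fin n => μ) (⋃ σ : Fin m ↪ Fin n, univ.pi (assignedCell B D σ)) :=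
        descFactorial_mul_le_pi_iUnion_assignedCell μ hBm hDm hBD hB hp hq
    _ = P ((fun ω i => X i ω) ⁻¹' ⋃ σ : Fin m ↪ Fin n, univ.pi (assignedCell B D σ)) := by
        rw [← Measure.map_apply (measurable_pi_lambda _ hXm) hcells,
          hX.map_fun_eq_pi_map fun i => (hXm i).aemeasurable]
        simp only [hlaw]
    _ ≤ P {ω | (fun i => X i ω) ∈ oneInEachCell B D} :=
        measure_mono <| preimage_mono <| iUnion_subset
          (pi_assignedCell_subset_oneInEachCell hBD hB)

lemma isProbabilityMeasure_unif {K : Set E2} (hK : 0 < volume.real K) :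
    IsProbabilityMeasure (unif K) :=
  have hK' := ENNReal.toReal_pos_iff.mp hK
  cond_isProbabilityMeasure_of_finite hK'.1.ne' hK'.2.ne

lemma unif_real_of_subset {K S : Set E2} (hS : S ⊆ K) :
    (unif K).real S = volume.real S / volume.real K := by
  rw [measureReal_def, unif, Measure.smul_apply, Measure.restrict_eq_self _ hS, smul_eq_mul,
    ENNReal.toReal_mul, ENNReal.toReal_inv, inv_mul_eq_div, measureReal_def, measureReal_def]

lemma ofReal_le_unif {K S : Set E2} (hS : S ⊆ K) (hK : 0 < volume.real K) {t : ℝ}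
    (h : t * volume.real K ≤ volume.real S) : ENNReal.ofReal t ≤ unif K S :=
  ENNReal.ofReal_le_of_le_toReal <| by
    rwa [← measureReal_def, unif_real_of_subset hS, le_div_iff₀ hK]

lemma ofReal_one_sub_le_unif_compl {K S : Set E2} (hS : S ⊆ K) (hSm : MeasurableSet S)
    (hK : 0 < volume.real K) {t : ℝ} (h : volume.real S ≤ t * volume.real K) :
    ENNReal.ofReal (1 - t) ≤ unif K Sᶜ := by
  have := isProbabilityMeasure_unif hK
  refine ENNReal.ofReal_le_of_le_toReal ?_
  rwa [← measureReal_def, probReal_compl_eq_one_sub hSm, unif_real_of_subset hS,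
    sub_le_sub_iff_left, div_le_iff₀ hK]

lemma exp_neg_two_mul_le_one_sub {x : ℝ} (hx₀ : 0 ≤ x) (hx : x ≤ 1 / 2) :
    exp (-(2 * x)) ≤ 1 - x := by
  rw [exp_neg, inv_le_iff_one_le_mul₀ (exp_pos _)]
  nlinarith [add_one_le_exp (2 * x)]

lemma exp_neg_two_mul_le_one_sub_div_pow {b : ℝ} {n k : ℕ} (hb : 0 ≤ b) (hbn : 2 * b ≤ n)
    (hk : k ≤ n) : exp (-(2 * b)) ≤ (1 - b / n) ^ k := by
  have hx₀ : 0 ≤ b / n := by positivity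
  have hx : b / n ≤ 1 / 2 := div_le_of_le_mul₀ n.cast_nonneg (by norm_num) (by linarith)
  have hnx : n * (b / n) ≤ b := by
    rcases n.eq_zero_or_pos with rfl | hn
    · simpa using hb
    · rw [mul_div_cancel₀ _ (by positivity)]
  calc exp (-(2 * b)) ≤ exp (-(2 * (b / n))) ^ n := by
        rw [← exp_nat_mul]; gcongr; linarith
    _ ≤ (1 - b / n) ^ n := by gcongr; exact exp_neg_two_mul_le_one_sub hx₀ hx
    _ ≤ (1 - b / n) ^ k := pow_le_pow_of_le_one (by linarith) (by linarith) hk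

lemma cube_le_four_mul_descFactorial_three {n : ℕ} (hn : 4 ≤ n) :
    (n : ℝ) ^ 3 ≤ 4 * n.descFactorial 3 := by
  obtain ⟨m, rfl⟩ := Nat.exists_eq_add_of_le' hn
  simp only [Nat.descFactorial_succ, Nat.descFactorial_zero]
  push_cast [show m + 4 - 2 = m + 2 by omega, show m + 4 - 1 = m + 3 by omega]
  nlinarith [sq_nonneg (m : ℝ), (m.cast_nonneg : (0 : ℝ) ≤ m)]

lemma le_descFactorial_three_mul {a b : ℝ} {n : ℕ} (ha : 0 ≤ a) (hb : 0 ≤ b) (hn : 4 ≤ n)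
    (hbn : 2 * b ≤ n) :
    a ^ 3 / 4 * exp (-(2 * b)) ≤ n.descFactorial 3 * ((a / n) ^ 3 * (1 - b / n) ^ (n - 3)) := by
  have hn₀ : (0 : ℝ) < n := by exact_mod_cast (by omega : 0 < n)
  have hcube : a ^ 3 / 4 ≤ n.descFactorial 3 * (a / n) ^ 3 := by
    rw [div_pow, mul_div_assoc', le_div_iff₀ (by positivity), div_mul_eq_mul_div,
      div_le_iff₀ (by norm_num)]
    nlinarith [cube_le_four_mul_descFactorial_three hn, pow_nonneg ha 3]
  rw [← mul_assoc]
  exact mul_le_mul hcube (exp_neg_two_mul_le_one_sub_div_pow hb hbn (Nat.sub_le n 3))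
    (exp_nonneg _) (by positivity)

end

theorem prob_one_point_in_each_cell_general
    (K : Set E2) (hK : IsCompact K)
    (hKint : (interior K).Nonempty)
    (a b : ℝ) (ha : 0 < a) (hb : 0 < b) :
    ∃ c > (0:ℝ), ∃ n₀ : ℕ, ∀ n : ℕ, n₀ ≤ n →
      ∀ D : Set E2, D ⊆ K → MeasurableSet D →
      ∀ B : Fin 3 → Set E2, (∀ k, B k ⊆ D) → (∀ k, MeasurableSet (B k)) →
        (Pairwise fun k l => Disjoint (B k) (B l)) →
        (∀ k, a * (volume K).toReal / n ≤ (volume (B k)).toReal) →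
        (volume D).toReal ≤ b * (volume K).toReal / n →
      ∀ (Ω : Type) (_ : MeasureSpace Ω), IsProbabilityMeasure (ℙ : Measure Ω) →
      ∀ X : Fin n → Ω → E2, (∀ i, Measurable (X i)) →
        iIndepFun X ℙ →
        (∀ i, Measure.map (X i) ℙ = unif K) →
        ENNReal.ofReal c ≤
          ℙ {ω | (∀ k : Fin 3, ({i : Fin n | X i ω ∈ B k}).ncard = 1) ∧
                 ∀ i : Fin n, X i ω ∉ D \ (B 0 ∪ B 1 ∪ B 2)} := by
  refine ⟨a ^ 3 / 4 * Real.exp (-(2 * b)), by positivity, max 4 ⌈2 * b⌉₊, ?_⟩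
  intro n hn D hDK hDm B hBD hBm hB hBa hDb Ω _ _ X hXm hX hlaw
  have hn₀ : (0 : ℝ) < n := by exact_mod_cast (by omega : 0 < n)
  have hbn : 2 * b ≤ n := (Nat.le_ceil _).trans (by exact_mod_cast le_of_max_le_right hn)
  have hK₀ : 0 < volume.real K :=
    ENNReal.toReal_pos (Measure.measure_pos_of_nonempty_interior _ hKint).ne' hK.measure_lt_top.ne
  have := isProbabilityMeasure_unif hK₀
  have hp (k : Fin 3) : ENNReal.ofReal (a / n) ≤ unif K (B k) :=
    ofReal_le_unif ((hBD k).trans hDK) hK₀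
      (by simpa only [measureReal_def, div_mul_eq_mul_div] using hBa k)
  have hq : ENNReal.ofReal (1 - b / n) ≤ unif K Dᶜ :=
    ofReal_one_sub_le_unif_compl hDK hDm hK₀
      (by simpa only [measureReal_def, div_mul_eq_mul_div] using hDb)
  have hcells : B 0 ∪ B 1 ∪ B 2 = ⋃ k, B k := by
    ext; simp [Fin.exists_fin_succ, or_assoc]
  rw [hcells]
  calc ENNReal.ofReal (a ^ 3 / 4 * Real.exp (-(2 * b)))
      ≤ ENNReal.ofReal (n.descFactorial 3 * ((a / n) ^ 3 * (1 - b / n) ^ (n - 3))) :=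
        ENNReal.ofReal_le_ofReal
          (le_descFactorial_three_mul ha.le hb.le (le_of_max_le_left hn) hbn)
    _ = n.descFactorial 3 *
          (ENNReal.ofReal (a / n) ^ 3 * ENNReal.ofReal (1 - b / n) ^ (n - 3)) := by
        rw [ENNReal.ofReal_mul (by positivity), ENNReal.ofReal_natCast,
          ENNReal.ofReal_mul (by positivity), ENNReal.ofReal_pow (by positivity),
          ENNReal.ofReal_pow (sub_nonneg.mpr ((div_le_one hn₀).mpr (by linarith)))]
    _ ≤ _ := descFactorial_mul_le_measure_oneInEachCell ℙ (unif K) hXm hX hlaw hBm hDm hBD hB hp hq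

theorem prob_one_point_in_each_cell
    (K : Set E2) (hK : IsCompact K) (hKconv : Convex ℝ K)
    (hKint : (interior K).Nonempty)
    (a b : ℝ) (ha : 0 < a) (hb : 0 < b) :
    ∃ c > (0:ℝ), ∃ n₀ : ℕ, ∀ n : ℕ, n₀ ≤ n →
      ∀ D : Set E2, D ⊆ K → MeasurableSet D →
      ∀ B : Fin 3 → Set E2, (∀ k, B k ⊆ D) → (∀ k, MeasurableSet (B k)) →
        (Pairwise fun k l => Disjoint (B k) (B l)) →
        (∀ k, a * (volume K).toReal / n ≤ (volume (B k)).toReal) →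
        (volume D).toReal ≤ b * (volume K).toReal / n →
      ∀ (Ω : Type) (_ : MeasureSpace Ω), IsProbabilityMeasure (ℙ : Measure Ω) →
      ∀ X : Fin n → Ω → E2, (∀ i, Measurable (X i)) →
        iIndepFun X ℙ →
        (∀ i, Measure.map (X i) ℙ = unif K) →
        ENNReal.ofReal c ≤
          ℙ {ω | (∀ k : Fin 3, ({i : Fin n | X i ω ∈ B k}).ncard = 1) ∧
                 ∀ i : Fin n, X i ω ∉ D \ (B 0 ∪ B 1 ∪ B 2)} :=
  prob_one_point_in_each_cell_general K hK hKint a b ha hb
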